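/- For every n ≥ 7 and every n×n phase matrix Θ, rank_phase(Θ) < n; equivalently, for every n×n phase matrix with n ≥ 7 there exists a singular complex n×n matrix with all entries nonzero whose entrywise phases equal Θ. -/

import Mathlib

/-- The phase rank of a complex matrix `Θ`: the minimum rank over all complex matrices
with nonzero entries whose entrywise phases agree with `Θ`. -/
noncomputable def phaseRank {n m : ℕ} (Θ : Matrix (Fin n) (Fin m) ℂ) : ℕ :=
  sInf {r | ∃ M : Matrix (Fin n) (Fin m) ℂ,
    (∀ i j, M i j ≠ 0) ∧ (∀ i j, M i j / ‖M i j‖ = Θ i j) ∧ M.rank = r}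

/-!
Multiply row `q` of `Θ` by a phase `e^{iψ_q}`. If in every column `j` none of the points
`Θ q j e^{iψ_q}` has all the others in the closed half-plane to the left of the line through it
and `0`, then every open half-plane contains one of them, and the origin is a strictly positive
combination `∑_q t_{jq} Θ q j e^{iψ_q} = 0`. The matrix `M i j = t_{ji} Θ i j` then has the phases of `Θ`
and the nonzero left kernel vector `(e^{iψ_q})_q`.

For `ψ` uniform on `(0, 2π]^n`, once `ψ_p` is fixed each other point of column `j` lies to the
left of the `p`-th one with probability `1/2`, independently; so column `j` fails with
probability at most `n 2^{-(n-1)}`, and some `ψ` works for all `n` columns as soon as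
`n² < 2^{n-1}`, which holds for `n ≥ 7`.
-/

open Complex ComplexConjugate Finset MeasureTheory
open scoped ENNReal Real

-- `(u * conj w).im < 0` says that `u` lies strictly clockwise of `w`, i.e. in the open
-- half-plane to the right of the line `ℝ w`.

lemma Complex.im_mul_conj_eq_norm_mul_norm_mul_sin (u v : ℂ) :
    (u * conj v).im = ‖u‖ * ‖v‖ * Real.sin (arg u - arg v) := by
  rw [Real.sin_sub, mul_im, conj_re, conj_im, ← norm_mul_cos_arg u, ← norm_mul_sin_arg u,
    ← norm_mul_cos_arg v, ← norm_mul_sin_arg v]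
  ring

lemma Complex.im_mul_exp_mul_I (v : ℂ) (x : ℝ) :
    (v * exp (x * I)).im = ‖v‖ * Real.sin (x + arg v) := by
  rw [← norm_mul_exp_arg_mul_I v, mul_assoc, ← Complex.exp_add, ← add_mul, ← ofReal_add,
    im_ofReal_mul, exp_ofReal_mul_I_im, add_comm, norm_mul_exp_arg_mul_I]

lemma exists_nonneg_mul_add_mul_eq_one {a b : ℂ} (ha : 0 < a.im) (hb : b.im < 0)
    (hab : 0 < (a * conj b).im) : ∃ x y : ℝ, 0 ≤ x ∧ 0 ≤ y ∧ x * a + y * b = 1 := by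
  set D := (a * conj b).im with hD
  simp only [mul_im, conj_re, conj_im] at hD
  refine ⟨-b.im / D, a.im / D, div_nonneg (by linarith) hab.le, div_nonneg ha.le hab.le, ?_⟩
  apply Complex.ext <;> simp <;> field_simp <;> linarith

section HalfPlane

variable {ι : Type*} [Fintype ι] {z : ι → ℂ}

lemma exists_forall_im_mul_conj_nonneg [Nonempty ι] (hz : ∀ q, 0 ≤ (z q).im) :
    ∃ p, ∀ q, 0 ≤ (z q * conj (z p)).im := by
  obtain ⟨p, -, hp⟩ := univ.exists_min_image (fun q => arg (z q)) univ_nonempty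
  refine ⟨p, fun q => ?_⟩
  rw [im_mul_conj_eq_norm_mul_norm_mul_sin]
  have hq := arg_le_pi (z q)
  have hp₀ := arg_nonneg_iff.2 (hz p)
  exact mul_nonneg (by positivity) <|
    Real.sin_nonneg_of_nonneg_of_le_pi (sub_nonneg.2 (hp q (mem_univ q))) (by linarith)

lemma exists_im_mul_conj_neg [Nonempty ι] (hz : ∀ p, ∃ q, (z q * conj (z p)).im < 0)
    {w : ℂ} (hw : w ≠ 0) : ∃ q, (z q * conj w).im < 0 := by
  by_contra! h
  obtain ⟨p, hp⟩ := exists_forall_im_mul_conj_nonneg (z := fun q => z q * conj w) h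
  obtain ⟨q, hq⟩ := hz p
  have hrot : z q * conj w * conj (z p * conj w) = z q * conj (z p) * (normSq w : ℂ) := by
    rw [← mul_conj, map_mul, conj_conj]; ring
  have := hp q
  simp only [hrot, im_mul_ofReal] at this
  nlinarith [normSq_pos.2 hw]

lemma exists_nonneg_sum_mul_eq_one (hz : ∀ w ≠ 0, ∃ q, (z q * conj w).im < 0) :
    ∃ s : ι → ℝ, (∀ q, 0 ≤ s q) ∧ ∑ q, (s q : ℂ) * z q = 1 := by
  classical
  by_cases hreal : ∃ r, (z r).im = 0 ∧ 0 < (z r).re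
  · obtain ⟨r, him, hre⟩ := hreal
    refine ⟨Pi.single r (z r).re⁻¹, fun q => ?_, ?_⟩
    · by_cases h : q = r <;> simp [h, hre.le]
    · rw [Fintype.sum_eq_single r fun q hq => by simp [hq]]
      apply Complex.ext <;> simp [him, hre.ne']
  push Not at hreal
  obtain ⟨a₀, ha₀⟩ := hz (-1) (by norm_num)
  obtain ⟨b₀, hb₀⟩ := hz 1 one_ne_zero
  -- `a` and `b` are the points making the smallest angle with the positive real axis,
  -- from above and from below
  obtain ⟨a, ha, hamax⟩ := (univ.filter fun q => 0 < (z q).im).exists_max_image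
    (fun q => (z q).re / (z q).im) ⟨a₀, by simpa using ha₀⟩
  obtain ⟨b, hb, hbmax⟩ := (univ.filter fun q => (z q).im < 0).exists_max_image
    (fun q => (z q).re / -(z q).im) ⟨b₀, by simpa using hb₀⟩
  simp only [mem_filter, mem_univ, true_and] at ha hb hamax hbmax
  have hab : 0 < (z a * conj (z b)).im := by
    -- otherwise no point would lie strictly clockwise of `z a`
    by_contra! hab
    obtain ⟨q, hq⟩ := hz (z a) fun h => by simp [h] at ha
    simp only [mul_im, conj_re, conj_im] at hab hq
    rcases lt_trichotomy (z q).im 0 with h | h | h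
    · have := (div_le_div_iff₀ (neg_pos.2 h) (neg_pos.2 hb)).1 (hbmax q h)
      nlinarith
    · rw [h] at hq
      nlinarith [hreal q h]
    · have := (div_le_div_iff₀ h ha).1 (hamax q h)
      nlinarith
  obtain ⟨x, y, hx, hy, hxy⟩ := exists_nonneg_mul_add_mul_eq_one ha hb hab
  refine ⟨fun q => (if q = a then x else 0) + (if q = b then y else 0), fun q => ?_, ?_⟩
  · dsimp only
    split_ifs <;> linarith
  · simpa [add_mul, sum_add_distrib, apply_ite ofReal, ite_mul] using hxy

lemma exists_nonneg_sum_mul_eq (hz : ∀ w ≠ 0, ∃ q, (z q * conj w).im < 0) (w : ℂ) :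
    ∃ s : ι → ℝ, (∀ q, 0 ≤ s q) ∧ ∑ q, (s q : ℂ) * z q = w := by
  rcases eq_or_ne w 0 with rfl | hw
  · exact ⟨0, fun _ => le_rfl, by simp⟩
  obtain ⟨s, hs, hsum⟩ := exists_nonneg_sum_mul_eq_one (z := fun q => z q * conj w) fun v hv => by
    obtain ⟨q, hq⟩ := hz (v * w) (mul_ne_zero hv hw)
    exact ⟨q, by rwa [map_mul, mul_comm (conj v), ← mul_assoc] at hq⟩
  refine ⟨fun q => s q * normSq w, fun q => mul_nonneg (hs q) (normSq_nonneg w), ?_⟩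
  calc ∑ q, ((s q * normSq w : ℝ) : ℂ) * z q = w * ∑ q, (s q : ℂ) * (z q * conj w) := by
        rw [mul_sum]; push_cast; congr! 1 with q; rw [← mul_conj]; ring
    _ = w := by rw [hsum, mul_one]

lemma exists_pos_sum_mul_eq_zero (hz : ∀ w ≠ 0, ∃ q, (z q * conj w).im < 0) :
    ∃ t : ι → ℝ, (∀ q, 0 < t q) ∧ ∑ q, (t q : ℂ) * z q = 0 := by
  choose s hs hsum using fun p => exists_nonneg_sum_mul_eq hz (-z p)
  refine ⟨fun q => 1 + ∑ p, s p q,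
    fun q => add_pos_of_pos_of_nonneg one_pos (sum_nonneg fun p _ => hs p q), ?_⟩
  push_cast
  simp only [add_mul, one_mul, sum_mul, sum_add_distrib]
  rw [sum_comm]
  simp [hsum]

end HalfPlane

lemma volume_Ioc_setOf_im_mul_exp_nonneg_le {v : ℂ} (hv : v ≠ 0) :
    volume.restrict (Set.Ioc 0 (2 * π)) {x : ℝ | 0 ≤ (v * exp (x * I)).im} ≤ ENNReal.ofReal π := by
  set A := {x : ℝ | 0 ≤ Real.sin (x + arg v)}
  have hA : {x : ℝ | 0 ≤ (v * exp (x * I)).im} = A := by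
    ext x
    simp only [Set.mem_ofPred_eq, A, im_mul_exp_mul_I,
      mul_nonneg_iff_of_pos_left (norm_pos_iff.2 hv)]
  have hAm : MeasurableSet A := measurableSet_le measurable_const (by fun_prop)
  have hAinv : ∀ g : AddSubgroup.zmultiples (2 * π), (fun x => g +ᵥ x) ⁻¹' A = A := by
    rintro ⟨_, k, rfl⟩
    ext x
    show 0 ≤ Real.sin (k • (2 * π) + x + arg v) ↔ 0 ≤ Real.sin (x + arg v)
    rw [zsmul_eq_mul, add_assoc, add_comm, Real.sin_periodic.int_mul k]
  -- `A` is `2π`-periodic, so its measure on a period interval does not depend on the interval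
  have hdom := isAddFundamentalDomain_Ioc Real.two_pi_pos
  rw [hA, Measure.restrict_apply hAm, ← zero_add (2 * π),
    (hdom 0).measure_set_eq (hdom (-arg v - π)) hAm hAinv]
  calc volume (A ∩ Set.Ioc (-arg v - π) (-arg v - π + 2 * π))
      ≤ volume (Set.Icc (-arg v) (-arg v + π)) := by
        refine measure_mono fun x ⟨hx, hlo, hhi⟩ => ⟨?_, by linarith⟩
        by_contra! hneg
        exact (Real.sin_neg_of_neg_of_neg_pi_lt (by linarith) (by linarith)).not_ge hx
    _ = ENNReal.ofReal π := by simp [Real.volume_Icc]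

lemma MeasureTheory.Measure.pi_setOf_forall_ne_le {α : Type*} [MeasurableSpace α] (ν : Measure α)
    [SigmaFinite ν] {m : ℕ} (p : Fin (m + 1)) (S : Fin (m + 1) → α → Set α)
    (hS : MeasurableSet {ψ : Fin (m + 1) → α | ∀ q ≠ p, ψ q ∈ S q (ψ p)}) {ε : ℝ≥0∞}
    (hε : ∀ q x, ν (S q x) ≤ ε) :
    Measure.pi (fun _ => ν) {ψ | ∀ q ≠ p, ψ q ∈ S q (ψ p)} ≤ ν Set.univ * ε ^ m := by
  set e := MeasurableEquiv.piFinSuccAbove (fun _ => α) p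
  set T : Set (α × (Fin m → α)) := {xy | ∀ j, xy.2 j ∈ S (p.succAbove j) xy.1}
  have hpre : {ψ : Fin (m + 1) → α | ∀ q ≠ p, ψ q ∈ S q (ψ p)} = e ⁻¹' T := by
    ext ψ
    exact ⟨fun h j => h _ (Fin.succAbove_ne p j), fun h q hq => by
      obtain ⟨j, rfl⟩ := Fin.exists_succAbove_eq hq; exact h j⟩
  rw [hpre] at hS ⊢
  rw [(measurePreserving_piFinSuccAbove (fun _ => ν) p).measure_preimage_equiv,
    Measure.prod_apply (e.measurableSet_preimage.1 hS)]
  calc ∫⁻ x, Measure.pi (fun _ => ν) (Prod.mk x ⁻¹' T) ∂ν ≤ ∫⁻ _, ε ^ m ∂ν := by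
        refine lintegral_mono fun x => ?_
        have : Prod.mk x ⁻¹' T = Set.univ.pi fun j => S (p.succAbove j) x := by
          ext y; simp [T]
        rw [this, Measure.pi_pi]
        exact (prod_le_pow_card univ _ ε fun j _ => hε (p.succAbove j) x).trans_eq (by simp)
    _ = ν Set.univ * ε ^ m := by rw [lintegral_const, mul_comm]

lemma measure_pi_setOf_forall_ne_im_mul_conj_nonneg_le {m : ℕ} {θ : Fin (m + 1) → ℂ}
    (hθ : ∀ q, θ q ≠ 0) (p : Fin (m + 1)) :
    Measure.pi (fun _ => volume.restrict (Set.Ioc 0 (2 * π)))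
        {ψ | ∀ q ≠ p, 0 ≤ (θ q * exp (ψ q * I) * conj (θ p * exp (ψ p * I))).im} ≤
      volume.restrict (Set.Ioc 0 (2 * π)) Set.univ * ENNReal.ofReal π ^ m := by
  set S : Fin (m + 1) → ℝ → Set ℝ := fun q x =>
    {y | 0 ≤ (θ q * exp (y * I) * conj (θ p * exp (x * I))).im}
  refine Measure.pi_setOf_forall_ne_le _ p S ?_ fun q x => ?_
  · simp only [S, Set.mem_ofPred_eq, Set.ofPred_forall]
    exact MeasurableSet.iInter fun q => MeasurableSet.iInter fun _ =>
      measurableSet_le measurable_const (by fun_prop)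
  · have : S q x = {y : ℝ | 0 ≤ (θ q * conj (θ p * exp (x * I)) * exp (y * I)).im} := by
      ext y; simp only [S, Set.mem_ofPred_eq, mul_right_comm (θ q)]
    rw [this]
    exact volume_Ioc_setOf_im_mul_exp_nonneg_le <|
      mul_ne_zero (hθ q) <| (map_ne_zero _).2 <| mul_ne_zero (hθ p) (exp_ne_zero _)

theorem exists_forall_exists_im_mul_conj_neg {κ : Type*} [Fintype κ] {m : ℕ}
    (Θ : Fin (m + 1) → κ → ℂ) (hΘ : ∀ q j, Θ q j ≠ 0)
    (hcard : Fintype.card κ * (m + 1) < 2 ^ m) :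
    ∃ ψ : Fin (m + 1) → ℝ, ∀ j p, ∃ q,
      (Θ q j * exp (ψ q * I) * conj (Θ p j * exp (ψ p * I))).im < 0 := by
  set ν := volume.restrict (Set.Ioc 0 (2 * π))
  set bad : κ → Fin (m + 1) → Set (Fin (m + 1) → ℝ) := fun j p =>
    {ψ | ∀ q ≠ p, 0 ≤ (Θ q j * exp (ψ q * I) * conj (Θ p j * exp (ψ p * I))).im}
  have hbad : ∀ j p, Measure.pi (fun _ => ν) (bad j p) ≤ ν Set.univ * ENNReal.ofReal π ^ m :=
    fun j p => measure_pi_setOf_forall_ne_im_mul_conj_nonneg_le (fun q => hΘ q j) p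
  by_contra! h
  have hcover : Set.univ ⊆ ⋃ j, ⋃ p, bad j p := fun ψ _ => by
    obtain ⟨j, p, hp⟩ := h ψ
    exact Set.mem_iUnion₂.2 ⟨j, p, fun q _ => hp q⟩
  have hν : ν Set.univ = 2 * ENNReal.ofReal π := by
    simp [ν, ENNReal.ofReal_mul]
  have hne : 2 * ENNReal.ofReal π * ENNReal.ofReal π ^ m ≠ 0 := by
    simp [Real.pi_pos]
  have hfin : 2 * ENNReal.ofReal π * ENNReal.ofReal π ^ m ≠ ⊤ := by
    simp [ENNReal.mul_eq_top]
  refine (ENNReal.mul_lt_mul_right hne hfin (by exact_mod_cast hcard :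
    (Fintype.card κ : ℝ≥0∞) * (m + 1) < 2 ^ m)).not_ge ?_
  calc 2 * ENNReal.ofReal π * ENNReal.ofReal π ^ m * 2 ^ m
      = Measure.pi (fun _ => ν) Set.univ := by
        rw [Measure.pi_univ, prod_const, card_univ, Fintype.card_fin, hν]; ring
    _ ≤ ∑ j, ∑ p, Measure.pi (fun _ => ν) (bad j p) :=
        (measure_mono hcover).trans <| (measure_iUnion_fintype_le _ _).trans <|
          sum_le_sum fun j _ => measure_iUnion_fintype_le _ _
    _ ≤ ∑ _j : κ, ∑ _p : Fin (m + 1), ν Set.univ * ENNReal.ofReal π ^ m :=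
        sum_le_sum fun j _ => sum_le_sum fun p _ => hbad j p
    _ = 2 * ENNReal.ofReal π * ENNReal.ofReal π ^ m * (Fintype.card κ * (m + 1)) := by
        simp [hν]; ring

lemma succ_mul_succ_lt_two_pow {m : ℕ} (hm : 6 ≤ m) : (m + 1) * (m + 1) < 2 ^ m := by
  induction m, hm using Nat.le_induction with
  | base => norm_num
  | succ k hk ih => rw [pow_succ]; nlinarith

lemma Matrix.rank_lt_card_of_det_eq_zero {K ι : Type*} [Field K] [Fintype ι] [DecidableEq ι]
    {A : Matrix ι ι K} (h : A.det = 0) : A.rank < Fintype.card ι := by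
  rw [A.rank_eq_finrank_span_row]
  refine (finrank_range_le_card A.row).lt_of_ne fun hcard => ?_
  have hunit := linearIndependent_rows_iff_isUnit.1
    (linearIndependent_iff_card_eq_finrank_span.2 hcard.symm)
  exact ((Matrix.isUnit_iff_isUnit_det A).1 hunit).ne_zero h

lemma phaseRank_le_rank {n m : ℕ} {Θ M : Matrix (Fin n) (Fin m) ℂ} (hM : ∀ i j, M i j ≠ 0)
    (hMΘ : ∀ i j, M i j / ‖M i j‖ = Θ i j) : phaseRank Θ ≤ M.rank :=
  Nat.sInf_le ⟨M, hM, hMΘ, rfl⟩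

/-- For `n ≥ 7`, every `n × n` phase matrix has nonmaximal phase rank; equivalently,
there is a singular complex matrix with all entries nonzero and the same phases. -/
theorem phaseRank_lt_of_seven_le {n : ℕ} (hn : 7 ≤ n)
    (Θ : Matrix (Fin n) (Fin n) ℂ) (hphase : ∀ i j, ‖Θ i j‖ = 1) :
    phaseRank Θ < n ∧
      ∃ M : Matrix (Fin n) (Fin n) ℂ, M.det = 0 ∧ (∀ i j, M i j ≠ 0) ∧
        (∀ i j, M i j / ‖M i j‖ = Θ i j) := by
  obtain ⟨m, rfl⟩ : ∃ m, n = m + 1 := ⟨n - 1, by omega⟩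
  have hΘ : ∀ i j, Θ i j ≠ 0 := fun i j h => by simpa [h] using hphase i j
  obtain ⟨ψ, hψ⟩ := exists_forall_exists_im_mul_conj_neg Θ hΘ
    (by simpa using succ_mul_succ_lt_two_pow (by omega : 6 ≤ m))
  choose t ht hsum using fun j =>
    exists_pos_sum_mul_eq_zero fun w hw => exists_im_mul_conj_neg (hψ j) hw
  set M : Matrix (Fin (m + 1)) (Fin (m + 1)) ℂ := Matrix.of fun i j => (t j i : ℂ) * Θ i j
  have hM : ∀ i j, M i j ≠ 0 := fun i j => mul_ne_zero (ofReal_ne_zero.2 (ht j i).ne') (hΘ i j)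
  have hMΘ : ∀ i j, M i j / ‖M i j‖ = Θ i j := fun i j => by
    simp [M, hphase, abs_of_pos (ht j i), (ht j i).ne']
  have hdet : M.det = 0 := Matrix.exists_vecMul_eq_zero_iff.1
    ⟨fun q => exp (ψ q * I), fun h => exp_ne_zero _ (congrFun h 0), funext fun j => by
      rw [Pi.zero_apply, ← hsum j, Matrix.vecMul, dotProduct]
      exact sum_congr rfl fun q _ => by simp only [M, Matrix.of_apply]; ring⟩
  refine ⟨(phaseRank_le_rank hM hMΘ).trans_lt ?_, M, hdet, hM, hMΘ⟩
  simpa using Matrix.rank_lt_card_of_det_eq_zero hdet
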